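/- Define J_rot(ℰ) := (1/(√2·π)) ∫_{φ=−π}^{π} √(cos φ + ℰ) dφ for ℰ > 1, and J_lib(ℰ) := (√2/π) ∫_{φ=−arccos(−ℰ)}^{arccos(−ℰ)} √(cos φ + ℰ) dφ for −1 < ℰ < 1. Then both functions satisfy the same second-order linear differential equation J''(ℰ) = J(ℰ)/(4·(1−ℰ²)) on their respective domains: for every ℰ > 1 the second derivative of J_rot at ℰ equals J_rot(ℰ)/(4(1−ℰ²)), and for every ℰ ∈ (−1,1) the second derivative of J_lib at ℰ equals J_lib(ℰ)/(4(1−ℰ²)). -/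

import Mathlib

open MeasureTheory Real

/-- The Whitham modulation quantity for superluminal rotational wavetrains,
`J_rot(ℰ) = (1/(√2 π)) ∫_{−π}^{π} √(cos φ + ℰ) dφ`, for `ℰ > 1`. -/
noncomputable def J_rot (E : ℝ) : ℝ :=
  (1 / (Real.sqrt 2 * Real.pi)) * ∫ φ in (-Real.pi)..Real.pi, Real.sqrt (Real.cos φ + E)

/-- The Whitham modulation quantity for superluminal librational wavetrains,
`J_lib(ℰ) = (√2/π) ∫_{−arccos(−ℰ)}^{arccos(−ℰ)} √(cos φ + ℰ) dφ`, for `−1 < ℰ < 1`. -/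
noncomputable def J_lib (E : ℝ) : ℝ :=
  (Real.sqrt 2 / Real.pi) *
    ∫ φ in (-(Real.arccos (-E)))..(Real.arccos (-E)), Real.sqrt (Real.cos φ + E)

open Set Filter Topology intervalIntegral

/-!
Both quantities are integrals over a fixed interval of an integrand `F(ℰ, φ)` that is smooth in
`ℰ`, so `J''` is obtained by differentiating twice under the integral sign. The equation then
reduces to `∫ (∂²F/∂ℰ² - F / (4(1 - ℰ²))) dφ = 0`, and this integrand is the `φ`-derivative of
a function with equal values at both endpoints: `-sin φ / (2(1 - ℰ²)√(cos φ + ℰ))` on `[-π, π]`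
in the rotational case.

In the librational case the endpoints `±arccos(-ℰ)` move with `ℰ` and `√(cos φ + ℰ)` vanishes
there. The substitution `φ = 2 arcsin(k sin θ)`, `k² = (1 + ℰ)/2`, turns `J_lib` into
`(2√2/π) ∫_{-π/2}^{π/2} (1 + ℰ) cos² θ / √(2 - (1 + ℰ) sin² θ) dθ`, whose integrand is smooth in
`ℰ < 1`; the exact derivative is then that of `-sin θ cos³ θ / (2(1 - ℰ) D^{3/2})` with
`D = 2 - (1 + ℰ) sin² θ`, which vanishes at `±π/2`.
-/

section ParametricIntegral

variable {F F' F'' : ℝ → ℝ → ℝ} {U : Set ℝ} {a b : ℝ}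

theorem hasDerivAt_intervalIntegral_of_continuousOn (hU : IsOpen U)
    (hF : ∀ E ∈ U, ContinuousOn (F E) (uIcc a b))
    (hF' : ContinuousOn (Function.uncurry F') (U ×ˢ uIcc a b))
    (hdF : ∀ E ∈ U, ∀ x ∈ uIcc a b, HasDerivAt (F · x) (F' E x) E) {E₀ : ℝ} (hE₀ : E₀ ∈ U) :
    HasDerivAt (fun E => ∫ x in a..b, F E x) (∫ x in a..b, F' E₀ x) E₀ := by
  obtain ⟨K, hK, hE₀K, hKU⟩ := exists_compact_subset hU hE₀
  obtain ⟨C, hC⟩ := (hK.prod isCompact_uIcc).exists_bound_of_continuousOn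
    (hF'.mono (prod_mono hKU subset_rfl))
  refine (intervalIntegral.hasDerivAt_integral_of_dominated_loc_of_deriv_le (bound := fun _ => C)
    (mem_interior_iff_mem_nhds.mp hE₀K)
    (eventually_of_mem (hU.mem_nhds hE₀) fun E hE =>
      ((hF E hE).mono uIoc_subset_uIcc).aestronglyMeasurable measurableSet_uIoc)
    ((hF E₀ hE₀).intervalIntegrable)
    (((hF'.uncurry_left E₀ hE₀).mono uIoc_subset_uIcc).aestronglyMeasurable measurableSet_uIoc)
    (ae_of_all _ fun x hx E hE => hC (E, x) ⟨hE, uIoc_subset_uIcc hx⟩)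
    intervalIntegrable_const
    (ae_of_all _ fun x hx E hE => hdF E (hKU hE) x (uIoc_subset_uIcc hx))).2

theorem deriv_deriv_intervalIntegral_of_continuousOn (hU : IsOpen U)
    (hF : ∀ E ∈ U, ContinuousOn (F E) (uIcc a b))
    (hF' : ContinuousOn (Function.uncurry F') (U ×ˢ uIcc a b))
    (hF'' : ContinuousOn (Function.uncurry F'') (U ×ˢ uIcc a b))
    (hdF : ∀ E ∈ U, ∀ x ∈ uIcc a b, HasDerivAt (F · x) (F' E x) E)
    (hdF' : ∀ E ∈ U, ∀ x ∈ uIcc a b, HasDerivAt (F' · x) (F'' E x) E) {E₀ : ℝ} (hE₀ : E₀ ∈ U) :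
    deriv (deriv fun E => ∫ x in a..b, F E x) E₀ = ∫ x in a..b, F'' E₀ x := by
  have hderiv : deriv (fun E => ∫ x in a..b, F E x) =ᶠ[𝓝 E₀] fun E => ∫ x in a..b, F' E x :=
    eventually_of_mem (hU.mem_nhds hE₀) fun E hE =>
      (hasDerivAt_intervalIntegral_of_continuousOn hU hF hF' hdF hE).deriv
  rw [hderiv.deriv_eq]
  exact (hasDerivAt_intervalIntegral_of_continuousOn hU
    (fun E hE => hF'.uncurry_left E hE) hF'' hdF' hE₀).deriv

end ParametricIntegral

theorem intervalIntegral_eq_of_hasDerivAt_sub {f g W : ℝ → ℝ} {a b : ℝ}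
    (hW : ∀ x ∈ uIcc a b, HasDerivAt W (f x - g x) x)
    (hf : IntervalIntegrable f volume a b) (hg : IntervalIntegrable g volume a b)
    (hWab : W a = W b) :
    ∫ x in a..b, f x = ∫ x in a..b, g x := by
  have h := integral_eq_sub_of_hasDerivAt hW (hf.sub hg)
  rw [integral_sub hf hg, hWab, sub_self] at h
  exact sub_eq_zero.mp h

theorem hasDerivAt_one_div_two_mul_sqrt_const_add {c E : ℝ} (h : 0 < c + E) :
    HasDerivAt (fun E => 1 / (2 * √(c + E))) (-1 / (4 * (c + E) * √(c + E))) E := by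
  have hsqrt := ((hasDerivAt_id' E).const_add c).sqrt h.ne'
  have hs : 0 < √(c + E) := sqrt_pos.mpr h
  refine ((hasDerivAt_const E 1).div (hsqrt.const_mul 2) (by positivity)).congr_deriv ?_
  field_simp
  rw [sq_sqrt h.le]
  ring

theorem hasDerivAt_sin_div_sqrt_cos_add {E φ : ℝ} (h : 0 < cos φ + E) :
    HasDerivAt (fun φ => sin φ / √(cos φ + E))
      (√(cos φ + E) / 2 + (1 - E ^ 2) / (2 * (cos φ + E) * √(cos φ + E))) φ := by
  have hs : 0 < √(cos φ + E) := sqrt_pos.mpr h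
  refine ((hasDerivAt_sin φ).div (((hasDerivAt_cos φ).add_const E).sqrt h.ne')
    hs.ne').congr_deriv ?_
  field_simp
  rw [sq_sqrt h.le]
  linear_combination (cos φ + E) * sin_sq_add_cos_sq φ

theorem cos_add_pos_of_one_lt {E : ℝ} (hE : 1 < E) (φ : ℝ) : 0 < cos φ + E := by
  linarith [neg_one_le_cos φ]

theorem deriv_deriv_integral_sqrt_cos_add {a b E : ℝ} (hE : 1 < E) :
    deriv (deriv fun E => ∫ φ in a..b, √(cos φ + E)) E =
      ∫ φ in a..b, -1 / (4 * (cos φ + E) * √(cos φ + E)) := by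
  have hpos : ∀ p ∈ Ioi (1 : ℝ) ×ˢ uIcc a b, 0 < cos p.2 + p.1 :=
    fun p hp => cos_add_pos_of_one_lt hp.1 p.2
  refine deriv_deriv_intervalIntegral_of_continuousOn (F := fun E φ => √(cos φ + E))
    (F' := fun E φ => 1 / (2 * √(cos φ + E)))
    (F'' := fun E φ => -1 / (4 * (cos φ + E) * √(cos φ + E))) isOpen_Ioi
    (fun _ _ => by fun_prop) ?_ ?_ (fun E hE φ _ => ?_) (fun E hE φ _ => ?_) hE
  · exact ContinuousOn.div (by fun_prop) (by fun_prop) fun p hp => by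
      have := hpos p hp; positivity
  · exact ContinuousOn.div (by fun_prop) (by fun_prop) fun p hp => by
      have := hpos p hp; positivity
  · simpa using ((hasDerivAt_id' E).const_add (cos φ)).sqrt (cos_add_pos_of_one_lt hE φ).ne'
  · exact hasDerivAt_one_div_two_mul_sqrt_const_add (cos_add_pos_of_one_lt hE φ)

theorem integral_deriv_deriv_sqrt_cos_add_eq {E : ℝ} (hE : 1 < E) :
    ∫ φ in -π..π, -1 / (4 * (cos φ + E) * √(cos φ + E)) =
      (∫ φ in -π..π, √(cos φ + E)) / (4 * (1 - E ^ 2)) := by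
  have hu := cos_add_pos_of_one_lt hE
  have hE2 : 1 - E ^ 2 ≠ 0 := by nlinarith
  rw [← intervalIntegral.integral_div]
  refine intervalIntegral_eq_of_hasDerivAt_sub
    (W := fun φ => -(sin φ / √(cos φ + E)) / (2 * (1 - E ^ 2))) (fun φ _ => ?_)
    (Continuous.intervalIntegrable (Continuous.div (by fun_prop) (by fun_prop) fun φ => by
      have := hu φ; positivity) _ _)
    (Continuous.intervalIntegrable (by fun_prop) _ _) (by simp)
  refine ((hasDerivAt_sin_div_sqrt_cos_add (hu φ)).neg.div_const _).congr_deriv ?_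
  have := sqrt_pos.mpr (hu φ)
  field_simp
  ring

theorem cos_two_mul_arcsin {x : ℝ} (h₁ : -1 ≤ x) (h₂ : x ≤ 1) :
    cos (2 * arcsin x) = 1 - 2 * x ^ 2 := by
  rw [cos_two_mul_eq_one_sub, sin_arcsin h₁ h₂]

theorem arccos_one_sub_two_mul_sq {k : ℝ} (h₀ : 0 ≤ k) (h₁ : k ≤ 1) :
    arccos (1 - 2 * k ^ 2) = 2 * arcsin k := by
  rw [← cos_two_mul_arcsin (by linarith) h₁, arccos_cos]
  · linarith [arcsin_nonneg.mpr h₀]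
  · linarith [arcsin_le_pi_div_two k]

theorem hasDerivAt_two_mul_arcsin_mul_sin {k : ℝ} (hk : |k| < 1) (θ : ℝ) :
    HasDerivAt (fun θ => 2 * arcsin (k * sin θ))
      (2 * (k * cos θ / √(1 - (k * sin θ) ^ 2))) θ := by
  have hks : |k * sin θ| < 1 := by
    rw [abs_mul]
    exact lt_of_le_of_lt (mul_le_of_le_one_right (abs_nonneg k) (abs_sin_le_one θ)) hk
  obtain ⟨hlo, hhi⟩ := abs_lt.mp hks
  refine (((hasDerivAt_arcsin hlo.ne' hhi.ne).comp θ
    ((hasDerivAt_sin θ).const_mul k)).const_mul 2).congr_deriv ?_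
  ring

theorem integral_sqrt_cos_add_arccos_eq {E : ℝ} (h1 : -1 < E) (h2 : E < 1) :
    ∫ φ in -arccos (-E)..arccos (-E), √(cos φ + E) =
      2 * ∫ θ in -(π / 2)..π / 2, (1 + E) * cos θ ^ 2 / √(2 - (1 + E) * sin θ ^ 2) := by
  set k := √((1 + E) / 2)
  have hk2 : k ^ 2 = (1 + E) / 2 := sq_sqrt (by linarith)
  have hk0 : 0 < k := sqrt_pos.mpr (by linarith)
  have hk1 : k < 1 := by nlinarith
  have hks : ∀ θ, 0 < 1 - (k * sin θ) ^ 2 := fun θ => by nlinarith [sin_sq_le_one θ]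
  have hsub := integral_comp_mul_deriv (a := -(π / 2)) (b := π / 2) (g := fun φ => √(cos φ + E))
    (fun θ _ => hasDerivAt_two_mul_arcsin_mul_sin (abs_lt.mpr ⟨by linarith, hk1⟩) θ)
    (Continuous.continuousOn (by
      refine continuous_const.mul (Continuous.div (by fun_prop) (by fun_prop) fun θ => ?_)
      exact (sqrt_pos.mpr (hks θ)).ne')) (by fun_prop)
  simp only [sin_neg, sin_pi_div_two, mul_neg, mul_one, arcsin_neg] at hsub
  rw [show -E = 1 - 2 * k ^ 2 by linarith, arccos_one_sub_two_mul_sq hk0.le hk1.le, ← hsub,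
    ← intervalIntegral.integral_const_mul]
  refine integral_congr fun θ hθ => ?_
  have hcos : 0 ≤ cos θ :=
    cos_nonneg_of_mem_Icc (by rwa [uIcc_of_le (by linarith [pi_pos])] at hθ)
  have hsq : cos (2 * arcsin (k * sin θ)) + E = (√2 * k * cos θ) ^ 2 := by
    rw [cos_two_mul_arcsin (by nlinarith [hks θ]) (by nlinarith [hks θ])]
    linear_combination (-2 : ℝ) * hk2 - 2 * k ^ 2 * sin_sq_add_cos_sq θ -
      k ^ 2 * cos θ ^ 2 * sq_sqrt zero_le_two
  have hD : 2 - (1 + E) * sin θ ^ 2 = 2 * (1 - (k * sin θ) ^ 2) := by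
    linear_combination (2 : ℝ) * sin θ ^ 2 * hk2
  simp only [Function.comp_apply]
  rw [hsq, sqrt_sq (by positivity), hD, sqrt_mul zero_le_two]
  have := sqrt_pos.mpr (hks θ)
  generalize √(1 - (k * sin θ) ^ 2) = q at this ⊢
  field_simp
  linear_combination 2 * cos θ ^ 2 * hk2 + k ^ 2 * cos θ ^ 2 * sq_sqrt zero_le_two

section
variable {c d E : ℝ}

theorem hasDerivAt_two_sub_one_add_mul : HasDerivAt (fun E => 2 - (1 + E) * d) (-d) E := by
  simpa using (((hasDerivAt_id' E).const_add 1).mul_const d).const_sub 2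

theorem hasDerivAt_one_add_mul_div_sqrt_two_sub (h : 0 < 2 - (1 + E) * d) :
    HasDerivAt (fun E => (1 + E) * c / √(2 - (1 + E) * d))
      (c * (4 - (1 + E) * d) / (2 * (2 - (1 + E) * d) * √(2 - (1 + E) * d))) E := by
  have hs : 0 < √(2 - (1 + E) * d) := sqrt_pos.mpr h
  have hnum : HasDerivAt (fun E => (1 + E) * c) c E := by
    simpa using ((hasDerivAt_id' E).const_add 1).mul_const c
  refine (hnum.div (hasDerivAt_two_sub_one_add_mul.sqrt h.ne') hs.ne').congr_deriv ?_
  field_simp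
  rw [sq_sqrt h.le]
  ring

theorem hasDerivAt_mul_four_sub_div_sqrt_two_sub (h : 0 < 2 - (1 + E) * d) :
    HasDerivAt (fun E => c * (4 - (1 + E) * d) / (2 * (2 - (1 + E) * d) * √(2 - (1 + E) * d)))
      (c * d * (8 - (1 + E) * d) / (4 * (2 - (1 + E) * d) ^ 2 * √(2 - (1 + E) * d))) E := by
  have hs : 0 < √(2 - (1 + E) * d) := sqrt_pos.mpr h
  have hD := hasDerivAt_two_sub_one_add_mul (d := d) (E := E)
  have hnum : HasDerivAt (fun E => c * (4 - (1 + E) * d)) (c * -d) E := by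
    simpa using ((((hasDerivAt_id' E).const_add 1).mul_const d).const_sub 4).const_mul c
  refine (hnum.div ((hD.const_mul 2).fun_mul (hD.sqrt h.ne'))
    (mul_pos (mul_pos two_pos h) hs).ne').congr_deriv ?_
  have hss := sq_sqrt h.le
  generalize √(2 - (1 + E) * d) = r at hs hss ⊢
  field_simp
  grind

end

theorem two_sub_one_add_mul_sin_sq_pos {E : ℝ} (hE : E < 1) (θ : ℝ) :
    0 < 2 - (1 + E) * sin θ ^ 2 := by
  rcases le_or_gt (1 + E) 0 with h | h
  · nlinarith [sq_nonneg (sin θ)]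
  · nlinarith [sin_sq_le_one θ]

theorem hasDerivAt_sin_mul_cos_pow_three_div {E θ : ℝ} (h : 0 < 2 - (1 + E) * sin θ ^ 2) :
    HasDerivAt (fun θ => sin θ * cos θ ^ 3 /
        ((2 - (1 + E) * sin θ ^ 2) * √(2 - (1 + E) * sin θ ^ 2)))
      (cos θ ^ 2 * ((cos θ ^ 2 - 3 * sin θ ^ 2) * (2 - (1 + E) * sin θ ^ 2) +
          3 * (1 + E) * sin θ ^ 2 * cos θ ^ 2) /
        ((2 - (1 + E) * sin θ ^ 2) ^ 2 * √(2 - (1 + E) * sin θ ^ 2))) θ := by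
  have hs : 0 < √(2 - (1 + E) * sin θ ^ 2) := sqrt_pos.mpr h
  have hD : HasDerivAt (fun θ => 2 - (1 + E) * sin θ ^ 2)
      (-((1 + E) * (2 * sin θ * cos θ))) θ := by
    simpa using (((hasDerivAt_sin θ).fun_pow 2).const_mul (1 + E)).const_sub 2
  have hnum : HasDerivAt (fun θ => sin θ * cos θ ^ 3)
      (cos θ * cos θ ^ 3 + sin θ * (3 * cos θ ^ 2 * -sin θ)) θ := by
    simpa using (hasDerivAt_sin θ).fun_mul ((hasDerivAt_cos θ).fun_pow 3)
  refine (hnum.div (hD.fun_mul (hD.sqrt h.ne')) (mul_pos h hs).ne').congr_deriv ?_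
  have hss := sq_sqrt h.le
  generalize √(2 - (1 + E) * sin θ ^ 2) = r at hs hss ⊢
  field_simp
  grind

theorem deriv_deriv_integral_one_add_mul_cos_sq_div {a b E : ℝ} (hE : E < 1) :
    deriv (deriv fun E => ∫ θ in a..b, (1 + E) * cos θ ^ 2 / √(2 - (1 + E) * sin θ ^ 2)) E =
      ∫ θ in a..b, cos θ ^ 2 * sin θ ^ 2 * (8 - (1 + E) * sin θ ^ 2) /
        (4 * (2 - (1 + E) * sin θ ^ 2) ^ 2 * √(2 - (1 + E) * sin θ ^ 2)) := by
  have hpos : ∀ p ∈ Iio (1 : ℝ) ×ˢ uIcc a b, 0 < 2 - (1 + p.1) * sin p.2 ^ 2 :=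
    fun p hp => two_sub_one_add_mul_sin_sq_pos hp.1 p.2
  refine deriv_deriv_intervalIntegral_of_continuousOn
    (F := fun E θ => (1 + E) * cos θ ^ 2 / √(2 - (1 + E) * sin θ ^ 2))
    (F' := fun E θ => cos θ ^ 2 * (4 - (1 + E) * sin θ ^ 2) /
      (2 * (2 - (1 + E) * sin θ ^ 2) * √(2 - (1 + E) * sin θ ^ 2)))
    (F'' := fun E θ => cos θ ^ 2 * sin θ ^ 2 * (8 - (1 + E) * sin θ ^ 2) /
        (4 * (2 - (1 + E) * sin θ ^ 2) ^ 2 * √(2 - (1 + E) * sin θ ^ 2))) isOpen_Iio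
    (fun E hE => ?_) ?_ ?_ (fun E hE θ _ => ?_) (fun E hE θ _ => ?_) hE
  · refine ContinuousOn.div (by fun_prop) (by fun_prop) fun θ _ => ?_
    have := two_sub_one_add_mul_sin_sq_pos hE θ
    positivity
  · refine ContinuousOn.div (by fun_prop) (by fun_prop) fun p hp => ?_
    have := hpos p hp
    positivity
  · refine ContinuousOn.div (by fun_prop) (by fun_prop) fun p hp => ?_
    have := hpos p hp
    positivity
  · exact hasDerivAt_one_add_mul_div_sqrt_two_sub (two_sub_one_add_mul_sin_sq_pos hE θ)
  · exact hasDerivAt_mul_four_sub_div_sqrt_two_sub (two_sub_one_add_mul_sin_sq_pos hE θ)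

theorem integral_deriv_deriv_one_add_mul_cos_sq_div_eq {E : ℝ} (h1 : -1 < E) (h2 : E < 1) :
    ∫ θ in -(π / 2)..π / 2, cos θ ^ 2 * sin θ ^ 2 * (8 - (1 + E) * sin θ ^ 2) /
        (4 * (2 - (1 + E) * sin θ ^ 2) ^ 2 * √(2 - (1 + E) * sin θ ^ 2)) =
      (∫ θ in -(π / 2)..π / 2, (1 + E) * cos θ ^ 2 / √(2 - (1 + E) * sin θ ^ 2)) /
        (4 * (1 - E ^ 2)) := by
  have hD := two_sub_one_add_mul_sin_sq_pos h2
  rw [← intervalIntegral.integral_div]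
  refine intervalIntegral_eq_of_hasDerivAt_sub
    (W := fun θ => -(sin θ * cos θ ^ 3 /
        ((2 - (1 + E) * sin θ ^ 2) * √(2 - (1 + E) * sin θ ^ 2))) / (2 * (1 - E)))
    (fun θ _ => ?_)
    (Continuous.intervalIntegrable (Continuous.div (by fun_prop) (by fun_prop) fun θ => by
      have := hD θ; positivity) _ _)
    (Continuous.intervalIntegrable (Continuous.div_const (Continuous.div (by fun_prop)
      (by fun_prop) fun θ => by have := hD θ; positivity) _) _ _) (by simp)
  refine ((hasDerivAt_sin_mul_cos_pow_three_div (hD θ)).neg.div_const _).congr_deriv ?_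
  have h1E : 1 - E ≠ 0 := by linarith
  have hE2 : 1 - E ^ 2 ≠ 0 := by nlinarith
  have hs : 0 < √(2 - (1 + E) * sin θ ^ 2) := sqrt_pos.mpr (hD θ)
  have hD' := (hD θ).ne'
  simp only [cos_sq' θ]
  generalize √(2 - (1 + E) * sin θ ^ 2) = r at hs ⊢
  generalize hDdef : 2 - (1 + E) * sin θ ^ 2 = D at hD' ⊢
  field_simp
  subst hDdef
  ring

/-- **A common second-order ODE.** Both `J_rot` (on `ℰ > 1`) and `J_lib` (on `−1 < ℰ < 1`)
satisfy the linear differential equation `J''(ℰ) = J(ℰ)/(4(1−ℰ²))`. -/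
theorem J_rot_J_lib_second_order_ODE :
    (∀ E : ℝ, 1 < E → deriv (deriv J_rot) E = J_rot E / (4 * (1 - E ^ 2))) ∧
    (∀ E : ℝ, -1 < E → E < 1 → deriv (deriv J_lib) E = J_lib E / (4 * (1 - E ^ 2))) := by
  refine ⟨fun E hE => ?_, fun E h1 h2 => ?_⟩
  · unfold J_rot
    simp only [deriv_const_mul_field']
    rw [deriv_deriv_integral_sqrt_cos_add hE, integral_deriv_deriv_sqrt_cos_add_eq hE]
    ring
  · have hJ : J_lib =ᶠ[𝓝 E] fun E => 2 * √2 / π *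
        ∫ θ in -(π / 2)..π / 2, (1 + E) * cos θ ^ 2 / √(2 - (1 + E) * sin θ ^ 2) :=
      eventually_of_mem (Ioo_mem_nhds h1 h2) fun E hE => by
        rw [J_lib, integral_sqrt_cos_add_arccos_eq hE.1 hE.2]
        ring
    rw [hJ.deriv.deriv_eq, hJ.eq_of_nhds]
    simp only [deriv_const_mul_field']
    rw [deriv_deriv_integral_one_add_mul_cos_sq_div h2,
      integral_deriv_deriv_one_add_mul_cos_sq_div_eq h1 h2]
    ring
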